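/- Let ξ(n) be a sequence in a finite-dimensional real inner product space 𝔱 and β₁,…,β_d linear functionals such that β_i(ξ(n)) → ∞ for all i in a nonempty set I. Then there exists η ∈ 𝔱 with ‖η‖ = 1 and β_i(η) > 0 for all i ∈ I. -/

import Mathlib

open Filter

theorem Set.Finite.exists_forall_pos_of_tendsto_atTop {α ι : Type*} {l : Filter α} [l.NeBot]
    {s : Set ι} (hs : s.Finite) {g : ι → α → ℝ} (h : ∀ i ∈ s, Tendsto (g i) l atTop) :
    ∃ a, ∀ i ∈ s, 0 < g i a :=
  ((hs.eventually_all).2 fun i hi => (h i hi).eventually_gt_atTop 0).exists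

theorem exists_norm_eq_one_forall_pos {E ι : Type*} [NormedAddCommGroup E] [NormedSpace ℝ E]
    (f : ι → E →ₗ[ℝ] ℝ) {s : Set ι} (hs : s.Nonempty) {x : E} (hx : ∀ i ∈ s, 0 < f i x) :
    ∃ η : E, ‖η‖ = 1 ∧ ∀ i ∈ s, 0 < f i η := by
  obtain ⟨i₀, hi₀⟩ := hs
  have hx₀ : x ≠ 0 := by
    rintro rfl
    simpa using hx i₀ hi₀
  refine ⟨‖x‖⁻¹ • x, norm_smul_inv_norm hx₀, fun i hi => ?_⟩
  rw [map_smul, smul_eq_mul]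
  exact mul_pos (inv_pos.2 (norm_pos_iff.2 hx₀)) (hx i hi)

theorem exists_unit_vector_positive_on_index_set_general
    {𝔱 : Type*} [NormedAddCommGroup 𝔱] [InnerProductSpace ℝ 𝔱]
    {d : ℕ} (β : Fin d → (𝔱 →ₗ[ℝ] ℝ)) (ξ : ℕ → 𝔱)
    (I : Set (Fin d)) (hI : I.Nonempty)
    (htend : ∀ i ∈ I, Tendsto (fun n => β i (ξ n)) atTop atTop) :
    ∃ η : 𝔱, ‖η‖ = 1 ∧ ∀ i ∈ I, 0 < β i η := by
  obtain ⟨n, hn⟩ := I.toFinite.exists_forall_pos_of_tendsto_atTop htend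
  exact exists_norm_eq_one_forall_pos β hI hn

/-- If `β_i(ξ(n)) → ∞` for all `i` in a nonempty set `I`, then there is a unit
vector `η` with `β_i(η) > 0` for all `i ∈ I`. -/
theorem exists_unit_vector_positive_on_index_set
    {𝔱 : Type*} [NormedAddCommGroup 𝔱] [InnerProductSpace ℝ 𝔱] [FiniteDimensional ℝ 𝔱]
    {d : ℕ} (β : Fin d → (𝔱 →ₗ[ℝ] ℝ)) (ξ : ℕ → 𝔱)
    (I : Set (Fin d)) (hI : I.Nonempty)
    (htend : ∀ i ∈ I, Tendsto (fun n => β i (ξ n)) atTop atTop) :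
    ∃ η : 𝔱, ‖η‖ = 1 ∧ ∀ i ∈ I, 0 < β i η :=
  exists_unit_vector_positive_on_index_set_general β ξ I hI htend
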